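/- arXiv:math/0702884 — 2 statements merged into one kernel-verified Lean document; each statement's English description precedes it below -/
import Mathlib

section
/- In the setting of the duality formula, for F ∈ S_{(n,1)} a simple functional and U ∈ P_{(n,1)} a simple process such that the πᵢ cancel all border terms, the product rule δ(F U) = F δ(U) − ⟨DF, U⟩_π holds, where ⟨DF, U⟩_π = Σᵢ πᵢ(Vᵢ) DᵢF Uᵢ and δ(U)ᵢ = −(∂_{Vᵢ}(πᵢUᵢ) + πᵢUᵢ ∂ln pᵢ(Vᵢ)). -/
open MeasureTheory Set Real

/-- product rule δ(F U) = F δ(U) − ⟨DF, U⟩_π, as a pointwise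
differential identity for the representing functions. -/
theorem stmt_5
    (n : ℕ)
    (f : (Fin n → ℝ) → ℝ) (u : Fin n → (Fin n → ℝ) → ℝ)
    (w : Fin n → ℝ → ℝ)      -- the weights πᵢ
    (ρd : Fin n → ℝ → ℝ)     -- ρdᵢ = ∂ ln pᵢ
    (x : Fin n → ℝ)
    (hf : DifferentiableAt ℝ f x)
    (hu : ∀ i, DifferentiableAt ℝ (u i) x)
    (hw : ∀ i, DifferentiableAt ℝ (w i) (x i)) :
    -- δ(F·U) :
    (-∑ i, (fderiv ℝ (fun z => w i (z i) * (f z * u i z)) x (Pi.single i 1) +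
        w i (x i) * (f x * u i x) * ρd i (x i)))
    =
    -- F δ(U) − ⟨DF, U⟩_π :
    f x * (-∑ i, (fderiv ℝ (fun z => w i (z i) * u i z) x (Pi.single i 1) +
        w i (x i) * u i x * ρd i (x i)))
    - ∑ i, w i (x i) * fderiv ℝ f x (Pi.single i 1) * u i x := by
  have key : ∀ i, fderiv ℝ (fun z => w i (z i) * (f z * u i z)) x (Pi.single i 1)
      = fderiv ℝ f x (Pi.single i 1) * (w i (x i) * u i x)
        + f x * fderiv ℝ (fun z => w i (z i) * u i z) x (Pi.single i 1) := by
    intro i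
    have hwi : DifferentiableAt ℝ (fun z : Fin n → ℝ => w i (z i)) x :=
      (hw i).comp x (differentiableAt_apply (𝕜 := ℝ) i x)
    have hg : DifferentiableAt ℝ (fun z => w i (z i) * u i z) x := hwi.mul (hu i)
    have heq : (fun z => w i (z i) * (f z * u i z))
        = fun z => f z * (w i (z i) * u i z) := by
      funext z; ring
    rw [heq, fderiv_fun_mul hf hg]
    simp only [ContinuousLinearMap.add_apply, ContinuousLinearMap.smul_apply, smul_eq_mul]
    ring
  simp only [key, neg_add, mul_add, mul_neg, Finset.mul_sum, Finset.sum_add_distrib,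
    ← Finset.sum_neg_distrib, sub_eq_add_neg]
  rw [← Finset.sum_add_distrib, ← Finset.sum_add_distrib, ← Finset.sum_add_distrib,
    ← Finset.sum_add_distrib]
  exact Finset.sum_congr rfl fun i _ => by ring
end

section
/- Let V₁ be exponentially distributed with parameter 1, with weight π₁ = 1 on (0,∞). Define Fₙ = fₙ(V₁) with fₙ(x) = max(1 − n x, 0), and U = u(V₁) with u(x) = (1 − x) 1_{(0,1)}(x). Then Fₙ → 0 in L²(Ω), but E[⟨DFₙ, U⟩_π] = E[−n 1_{(0,1/n)}(V₁)(1 − V₁)] → −1 ≠ 0 as n → ∞. Consequently the Malliavin derivative operator D is not closable from L²(Ω) into the weighted L² space of processes. -/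
open MeasureTheory Set Filter Real ProbabilityTheory
open scoped ENNReal NNReal

lemma integral_expMeasure_one (g : ℝ → ℝ) :
    ∫ x, g x ∂(expMeasure 1) = ∫ x in Ioi (0:ℝ), g x * Real.exp (-x) := by
  have hd : expMeasure 1 = volume.withDensity
      (fun x => ((Real.toNNReal (if 0 ≤ x then Real.exp (-x) else 0) : ℝ≥0) : ℝ≥0∞)) := by
    rw [show expMeasure 1 = volume.withDensity (exponentialPDF 1) from rfl]
    congr 1
    ext x
    rw [exponentialPDF_eq, ENNReal.ofReal]
    simp
  have hm : Measurable fun x : ℝ => Real.toNNReal (if 0 ≤ x then Real.exp (-x) else 0) := by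
    apply Measurable.real_toNNReal
    exact Measurable.ite measurableSet_Ici (by fun_prop) measurable_const
  rw [hd, integral_withDensity_eq_integral_smul hm g]
  have he : (fun x => (Real.toNNReal (if 0 ≤ x then Real.exp (-x) else 0)) • g x)
      = Set.indicator (Ici (0:ℝ)) (fun x => g x * Real.exp (-x)) := by
    ext x
    simp only [NNReal.smul_def, Set.indicator_apply, mem_Ici]
    split
    · rw [Real.coe_toNNReal _ (Real.exp_nonneg _), smul_eq_mul, mul_comm]
    · simp
  rw [he, integral_indicator measurableSet_Ici, integral_Ici_eq_integral_Ioi]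

lemma part2_eq (n : ℕ) (hn : 1 ≤ n) :
    ∫ x in Ioi (0:ℝ), (if x ∈ Ioo (0:ℝ) (1/(n:ℝ)) then -(n:ℝ)*(1-x) else 0) * Real.exp (-x)
      = -Real.exp (-(1/(n:ℝ))) := by
  have hn0 : (0:ℝ) < (n:ℝ) := by exact_mod_cast hn
  have heq : (fun x => (if x ∈ Ioo (0:ℝ) (1/(n:ℝ)) then -(n:ℝ)*(1-x) else 0) * Real.exp (-x))
      = Set.indicator (Ioo (0:ℝ) (1/(n:ℝ))) (fun x => -(n:ℝ)*(1-x) * Real.exp (-x)) := by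
    ext x
    simp only [Set.indicator_apply]
    split <;> simp
  rw [heq, integral_indicator measurableSet_Ioo, Measure.restrict_restrict measurableSet_Ioo]
  have hsub : Ioo (0:ℝ) (1/(n:ℝ)) ∩ Ioi 0 = Ioo (0:ℝ) (1/(n:ℝ)) :=
    inter_eq_left.2 Ioo_subset_Ioi_self
  rw [hsub, ← integral_Ioc_eq_integral_Ioo,
    ← intervalIntegral.integral_of_le (by positivity : (0:ℝ) ≤ 1/(n:ℝ))]
  have key : ∀ x ∈ uIcc (0:ℝ) (1/(n:ℝ)),
      HasDerivAt (fun y => -(n:ℝ) * (y * Real.exp (-y))) (-(n:ℝ)*(1-x) * Real.exp (-x)) x := by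
    intro x _
    have h1 : HasDerivAt (fun y : ℝ => Real.exp (-y)) (-Real.exp (-x)) x := by
      simpa [Function.comp_def] using (Real.hasDerivAt_exp (-x)).comp x (hasDerivAt_neg x)
    have h3 := ((hasDerivAt_id x).mul h1).const_mul (-(n:ℝ))
    refine h3.congr_deriv ?_
    simp only [id]
    ring
  rw [intervalIntegral.integral_eq_sub_of_hasDerivAt key
    (Continuous.intervalIntegrable (by fun_prop) _ _)]
  have : (n:ℝ) * (1/(n:ℝ)) = 1 := by field_simp
  simp only [neg_mul, Real.exp_zero, mul_zero, zero_mul, neg_zero, sub_zero]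
  rw [← mul_assoc, this, one_mul]

lemma part1_le (n : ℕ) (hn : 1 ≤ n) :
    ∫ x in Ioi (0:ℝ), (max (1 - (n:ℝ)*x) 0)^2 * Real.exp (-x) ≤ 1/(n:ℝ) := by
  have hn0 : (0:ℝ) < (n:ℝ) := by exact_mod_cast hn
  have hint1 : IntegrableOn (fun x => (max (1 - (n:ℝ)*x) 0)^2 * Real.exp (-x)) (Ioi 0) := by
    apply Integrable.mono' (g := fun x => Real.exp (-x))
    · exact (by simpa using exp_neg_integrableOn_Ioi 0 (zero_lt_one) :
        IntegrableOn (fun x : ℝ => Real.exp (-x)) (Ioi 0))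
    · exact (Continuous.aestronglyMeasurable (by fun_prop))
    · filter_upwards [ae_restrict_mem measurableSet_Ioi] with x hx
      have h1 : max (1 - (n:ℝ)*x) 0 ≤ 1 := by
        apply max_le _ zero_le_one
        nlinarith [mem_Ioi.1 hx]
      have h2 : (0:ℝ) ≤ max (1 - (n:ℝ)*x) 0 := le_max_right _ _
      have h4 : (0:ℝ) ≤ Real.exp (-x) := Real.exp_nonneg _
      rw [Real.norm_eq_abs, abs_of_nonneg (by positivity)]
      have hsq : (max (1 - (n:ℝ)*x) 0)^2 ≤ 1 := by nlinarith
      calc (max (1 - (n:ℝ)*x) 0)^2 * Real.exp (-x) ≤ 1 * Real.exp (-x) :=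
            mul_le_mul_of_nonneg_right hsq h4
        _ = Real.exp (-x) := one_mul _
  have hint2 : IntegrableOn (Set.indicator (Ioo (0:ℝ) (1/(n:ℝ))) (fun _ => (1:ℝ))) (Ioi 0) := by
    rw [IntegrableOn, integrable_indicator_iff measurableSet_Ioo]
    refine integrableOn_const ?_ (by simp)
    rw [Measure.restrict_apply measurableSet_Ioo]
    exact (lt_of_le_of_lt (measure_mono (inter_subset_left)) (by simp)).ne
  have hmono := setIntegral_mono_on hint1 hint2 measurableSet_Ioi ?_
  · refine le_trans hmono (le_of_eq ?_)
    rw [integral_indicator measurableSet_Ioo, Measure.restrict_restrict measurableSet_Ioo,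
      inter_eq_left.2 Ioo_subset_Ioi_self, setIntegral_const]
    simp [Real.volume_Ioo, ENNReal.toReal_ofReal (le_of_lt (by positivity : (0:ℝ) < 1/(n:ℝ)))]
  · intro x hx
    by_cases hlt : x < 1/(n:ℝ)
    · have hmem : x ∈ Ioo (0:ℝ) (1/(n:ℝ)) := ⟨mem_Ioi.1 hx, hlt⟩
      rw [Set.indicator_of_mem hmem]
      have h1 : max (1 - (n:ℝ)*x) 0 ≤ 1 := by
        apply max_le _ zero_le_one
        nlinarith [mem_Ioi.1 hx]
      have h2 : (0:ℝ) ≤ max (1 - (n:ℝ)*x) 0 := le_max_right _ _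
      have h3 : Real.exp (-x) ≤ 1 := Real.exp_le_one_iff.2 (by linarith [mem_Ioi.1 hx])
      have h4 : (0:ℝ) ≤ Real.exp (-x) := Real.exp_nonneg _
      nlinarith
    · have : max (1 - (n:ℝ)*x) 0 = 0 := by
        apply max_eq_right
        have : (1:ℝ) ≤ (n:ℝ) * x := by
          rw [← div_le_iff₀' hn0] at *
          linarith [not_lt.1 hlt, (one_div (n:ℝ)) ▸ not_lt.1 hlt]
        linarith
      rw [this]
      have : ((0:ℝ))^2 * Real.exp (-x) = 0 := by ring
      rw [this]
      exact Set.indicator_nonneg (fun _ _ => zero_le_one) x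

/-- Remark 2.2: for V₁ ~ Exp(1) and Fₙ = max(1 - nV₁, 0),
Fₙ → 0 in L²(Ω) while E[⟨DFₙ, U⟩_π] = E[-n·1_{(0,1/n)}(V₁)(1-V₁)] → -1 ≠ 0,
so the Malliavin derivative D is not closable. -/
theorem stmt_9
    {Ω : Type*} [MeasurableSpace Ω] (μ : Measure Ω) [IsProbabilityMeasure μ]
    (V : Ω → ℝ) (hV : Measurable V)
    (hlaw : Measure.map V μ = expMeasure 1) :
    -- Fₙ → 0 in L²
    Tendsto (fun n : ℕ => ∫ ω, (max (1 - (n : ℝ) * V ω) 0) ^ 2 ∂μ) atTop (nhds 0) ∧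
    -- E[⟨DFₙ, U⟩_π] = E[-n 1_{(0,1/n)}(V)(1-V)] → -1
    Tendsto (fun n : ℕ =>
        ∫ ω, (if V ω ∈ Ioo (0 : ℝ) (1 / (n : ℝ)) then -(n : ℝ) * (1 - V ω) else 0) ∂μ)
      atTop (nhds (-1)) := by
  have ht : ∀ g : ℝ → ℝ, Measurable g →
      ∫ ω, g (V ω) ∂μ = ∫ x in Ioi (0:ℝ), g x * Real.exp (-x) := by
    intro g hg
    rw [← integral_expMeasure_one g, ← hlaw,
      integral_map hV.aemeasurable hg.aestronglyMeasurable]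
  constructor
  · have hrw : ∀ n : ℕ, ∫ ω, (max (1 - (n:ℝ) * V ω) 0)^2 ∂μ
        = ∫ x in Ioi (0:ℝ), (max (1 - (n:ℝ)*x) 0)^2 * Real.exp (-x) := by
      intro n
      exact ht (fun x => (max (1 - (n:ℝ)*x) 0)^2) (Continuous.measurable (by fun_prop))
    apply tendsto_of_tendsto_of_tendsto_of_le_of_le'
      (tendsto_const_nhds : Tendsto (fun _ : ℕ => (0:ℝ)) atTop (nhds 0))
      tendsto_one_div_atTop_nhds_zero_nat
    · filter_upwards with n
      rw [hrw n]
      apply setIntegral_nonneg measurableSet_Ioi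
      intro x _
      positivity
    · filter_upwards [eventually_ge_atTop 1] with n hn
      rw [hrw n]
      exact part1_le n hn
  · have hrw : ∀ n : ℕ, ∫ ω, (if V ω ∈ Ioo (0:ℝ) (1/(n:ℝ)) then -(n:ℝ)*(1 - V ω) else 0) ∂μ
        = ∫ x in Ioi (0:ℝ),
            (if x ∈ Ioo (0:ℝ) (1/(n:ℝ)) then -(n:ℝ)*(1-x) else 0) * Real.exp (-x) := by
      intro n
      exact ht (fun x => if x ∈ Ioo (0:ℝ) (1/(n:ℝ)) then -(n:ℝ)*(1-x) else 0)
        (Measurable.ite measurableSet_Ioo (by fun_prop) measurable_const)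
    have hfin : Tendsto (fun n : ℕ => -Real.exp (-(1/(n:ℝ)))) atTop (nhds (-1)) := by
      have h1 : Tendsto (fun n : ℕ => -(1/(n:ℝ))) atTop (nhds 0) := by
        simpa using (tendsto_one_div_atTop_nhds_zero_nat (𝕜 := ℝ)).neg
      have h2 := (Real.continuous_exp.tendsto 0).comp h1
      simpa using h2.neg
    apply Tendsto.congr' _ hfin
    filter_upwards [eventually_ge_atTop 1] with n hn
    rw [hrw n, part2_eq n hn]
end
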